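/- Let c ∈ W^{2,∞}(ℝ³) with c = 1 outside a bounded Lipschitz domain Ω and 0 < c₋ ≤ c ≤ c₊, and suppose the resolvent estimate ‖û‖_{L²(Ω)} ≤ C k^{-1}‖φ‖_{L²(Ω)} holds for outgoing solutions of −Δû − (k²/c²)û = φ with supp φ ⊂ Ω, for all k ≥ k₀. Let f ∈ H⁴(ℝ³) with supp f ⊂ Ω and let û(·,k) be the outgoing solution with right-hand side φ = (ik/c²)f. Then the remainder R(x,k) := û(x,k) + i f(x)/k satisfies ‖R(·,k)‖_{L²(Ω)} ≤ C k^{-3} ‖f‖_{H⁴(Ω)} for all k ≥ k₀, with C depending only on Ω, c₋, c₊, ‖c‖_{W^{2,∞}} and the resolvent constant. -/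

import Mathlib

/-!
With `w := -i f/k + i c²Δf/k³`, a direct computation gives
`(-Δ - k²/c²) w = (ik/c²) f - i Δ(c²Δf)/k³`. Hence `R₁ := û - w` is outgoing (`w` has compact
support) and solves the Helmholtz equation with source `i Δ(c²Δf)/k³`, so the resolvent estimate
gives `‖R₁‖ ≤ C₀ k⁻⁴ ‖Δ(c²Δf)‖`. Since `û + i f/k = R₁ + i c²Δf/k³`, it remains to bound
`‖c²Δf‖` and `‖Δ(c²Δf)‖` by `‖f‖_{H⁴}`, which is the Leibniz rule together with the
`W^{2,∞}` bound on `c`.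
-/

open Complex MeasureTheory Real

noncomputable section

abbrev E3 := EuclideanSpace ℝ (Fin 3)

/-- Partial derivative in direction i of a complex-valued function on ℝ³. -/
def pderiv3 (i : Fin 3) (g : E3 → ℂ) (x : E3) : ℂ :=
  fderiv ℝ g x (EuclideanSpace.single i 1)

/-- Laplacian of a complex-valued function on ℝ³. -/
def lap3 (g : E3 → ℂ) (x : E3) : ℂ := ∑ i, pderiv3 i (pderiv3 i g) x

/-- The L²(Ω) norm of a function. -/
def L2On (Ω : Set E3) (g : E3 → ℂ) : ℝ := (∫ x in Ω, ‖g x‖ ^ 2) ^ ((1 : ℝ) / 2)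

/-- The H⁴(Ω) norm of a function (via iterated derivatives of order ≤ 4). -/
def H4On (Ω : Set E3) (g : E3 → ℂ) : ℝ :=
  (∑ j ∈ Finset.range 5, ∫ x in Ω, ‖iteratedFDeriv ℝ j g x‖ ^ 2) ^ ((1 : ℝ) / 2)

lemma contDiff_pderiv3 {n : ℕ} {g : E3 → ℂ} (hg : ContDiff ℝ (n + 1) g) (i : Fin 3) :
    ContDiff ℝ n (pderiv3 i g) :=
  (ContinuousLinearMap.apply ℝ ℂ (EuclideanSpace.single i (1 : ℝ))).contDiff.comp
    (hg.fderiv_right le_rfl)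

lemma contDiff_lap3 {n : ℕ} {g : E3 → ℂ} (hg : ContDiff ℝ (n + 2) g) :
    ContDiff ℝ n (lap3 g) :=
  ContDiff.sum fun i _ => contDiff_pderiv3 (contDiff_pderiv3 hg i) i

lemma norm_iteratedFDeriv_pderiv3_le {n : ℕ} {g : E3 → ℂ} (hg : ContDiff ℝ (n + 1) g)
    (i : Fin 3) (x : E3) :
    ‖iteratedFDeriv ℝ n (pderiv3 i g) x‖ ≤ ‖iteratedFDeriv ℝ (n + 1) g x‖ := by
  have h := norm_iteratedFDeriv_clm_apply_const (c := EuclideanSpace.single i (1 : ℝ))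
    (hg.fderiv_right le_rfl).contDiffAt (le_refl (n : WithTop ℕ∞)) (x := x)
  rwa [PiLp.norm_single, norm_one, one_mul, norm_iteratedFDeriv_fderiv] at h

lemma norm_iteratedFDeriv_lap3_le {n : ℕ} {g : E3 → ℂ} (hg : ContDiff ℝ (n + 2) g) (x : E3) :
    ‖iteratedFDeriv ℝ n (lap3 g) x‖ ≤ 3 * ‖iteratedFDeriv ℝ (n + 2) g x‖ := by
  have hpp : ∀ i : Fin 3, ContDiff ℝ (n + 1) (pderiv3 i g) := fun i => contDiff_pderiv3 hg i
  have hsum : iteratedFDeriv ℝ n (lap3 g) x =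
      ∑ i : Fin 3, iteratedFDeriv ℝ n (pderiv3 i (pderiv3 i g)) x := by
    rw [show lap3 g = fun x => ∑ i : Fin 3, pderiv3 i (pderiv3 i g) x from rfl,
      iteratedFDeriv_sum fun i _ => contDiff_pderiv3 (hpp i) i, Finset.sum_apply]
  calc ‖iteratedFDeriv ℝ n (lap3 g) x‖
      ≤ ∑ i : Fin 3, ‖iteratedFDeriv ℝ n (pderiv3 i (pderiv3 i g)) x‖ :=
        hsum ▸ norm_sum_le _ _
    _ ≤ ∑ _i : Fin 3, ‖iteratedFDeriv ℝ (n + 2) g x‖ := by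
        gcongr with i
        exact (norm_iteratedFDeriv_pderiv3_le (hpp i) i x).trans
          (norm_iteratedFDeriv_pderiv3_le hg i x)
    _ = 3 * ‖iteratedFDeriv ℝ (n + 2) g x‖ := by simp

lemma pderiv3_linear_comb {g₁ g₂ : E3 → ℂ} (h₁ : Differentiable ℝ g₁)
    (h₂ : Differentiable ℝ g₂) (a b : ℂ) (i : Fin 3) :
    pderiv3 i (fun y => a * g₁ y + b * g₂ y) =
      fun y => a * pderiv3 i g₁ y + b * pderiv3 i g₂ y := by
  funext y
  simp only [pderiv3, fderiv_fun_add ((h₁ y).const_mul a) ((h₂ y).const_mul b),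
    fderiv_const_mul (h₁ y), fderiv_const_mul (h₂ y), add_apply,
    FunLike.coe_smul, Pi.smul_apply, smul_eq_mul]

lemma lap3_linear_comb {g₁ g₂ : E3 → ℂ} (h₁ : ContDiff ℝ 2 g₁) (h₂ : ContDiff ℝ 2 g₂)
    (a b : ℂ) (x : E3) :
    lap3 (fun y => a * g₁ y + b * g₂ y) x = a * lap3 g₁ x + b * lap3 g₂ x := by
  have hd : ∀ {g : E3 → ℂ}, ContDiff ℝ 2 g → ∀ i, Differentiable ℝ (pderiv3 i g) :=
    fun hg i => (contDiff_pderiv3 (n := 1) hg i).differentiable one_ne_zero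
  simp only [lap3, Finset.mul_sum, ← Finset.sum_add_distrib,
    pderiv3_linear_comb (h₁.differentiable two_ne_zero) (h₂.differentiable two_ne_zero),
    pderiv3_linear_comb (hd h₁ _) (hd h₂ _)]

lemma support_lap3_subset (g : E3 → ℂ) : Function.support (lap3 g) ⊆ tsupport g := by
  intro x hx
  obtain ⟨i, -, hi⟩ := Finset.exists_ne_zero_of_sum_ne_zero hx
  exact tsupport_fderiv_apply_subset ℝ _ <| tsupport_fderiv_apply_subset ℝ _ <|
    subset_closure hi

lemma tsupport_lap3_subset (g : E3 → ℂ) : tsupport (lap3 g) ⊆ tsupport g :=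
  closure_minimal (support_lap3_subset g) (isClosed_tsupport g)

open Bornology

lemma Continuous.integrableOn_of_isBounded {X F : Type*} [MetricSpace X] [ProperSpace X]
    [MeasurableSpace X] [OpensMeasurableSpace X] {μ : Measure X} [IsFiniteMeasureOnCompacts μ]
    [NormedAddCommGroup F] {g : X → F} (hg : Continuous g) {s : Set X} (hs : IsBounded s) :
    IntegrableOn g s μ :=
  (hg.continuousOn.integrableOn_compact hs.isCompact_closure).mono_set subset_closure

lemma L2On_nonneg (Ω : Set E3) (g : E3 → ℂ) : 0 ≤ L2On Ω g :=
  Real.rpow_nonneg (integral_nonneg fun _ => by positivity) _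

section L2On

variable {Ω : Set E3}

lemma Continuous.memLp_two_restrict {g : E3 → ℂ} (hg : Continuous g) (hΩ : IsBounded Ω) :
    MemLp g 2 (volume.restrict Ω) :=
  (memLp_two_iff_integrable_sq_norm hg.aestronglyMeasurable).2
    ((hg.norm.pow 2).integrableOn_of_isBounded hΩ)

lemma L2On_eq_toReal_eLpNorm {g : E3 → ℂ} (hg : MemLp g 2 (volume.restrict Ω)) :
    L2On Ω g = (eLpNorm g 2 (volume.restrict Ω)).toReal := by
  rw [hg.eLpNorm_eq_integral_rpow_norm two_ne_zero ENNReal.ofNat_ne_top,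
    ENNReal.toReal_ofReal (by positivity), L2On]
  norm_num

lemma L2On_add_le {p q : E3 → ℂ} (hp : MemLp p 2 (volume.restrict Ω))
    (hq : MemLp q 2 (volume.restrict Ω)) :
    L2On Ω (fun x => p x + q x) ≤ L2On Ω p + L2On Ω q := by
  rw [L2On_eq_toReal_eLpNorm (g := fun x => p x + q x) (hp.add hq), L2On_eq_toReal_eLpNorm hp,
    L2On_eq_toReal_eLpNorm hq,
    ← ENNReal.toReal_add hp.eLpNorm_ne_top hq.eLpNorm_ne_top]
  exact ENNReal.toReal_mono (ENNReal.add_ne_top.2 ⟨hp.eLpNorm_ne_top, hq.eLpNorm_ne_top⟩)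
    (eLpNorm_add_le hp.1 hq.1 one_le_two)

lemma L2On_const_mul (g : E3 → ℂ) (a : ℂ) :
    L2On Ω (fun x => a * g x) = ‖a‖ * L2On Ω g := by
  simp only [L2On, norm_mul, mul_pow, integral_const_mul]
  rw [Real.mul_rpow (by positivity) (integral_nonneg fun _ => by positivity),
    ← Real.rpow_natCast, ← Real.rpow_mul (norm_nonneg a)]
  norm_num

lemma L2On_I_div_pow_mul (g : E3 → ℂ) {k : ℝ} (hk : 0 < k) (n : ℕ) :
    L2On Ω (fun x => I / (k : ℂ) ^ n * g x) = L2On Ω g / k ^ n := by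
  rw [L2On_const_mul, norm_div, norm_I, norm_pow, Complex.norm_real, Real.norm_of_nonneg hk.le]
  ring

lemma L2On_mono {g g' : E3 → ℂ} (hg' : IntegrableOn (fun x => ‖g' x‖ ^ 2) Ω)
    (h : ∀ x, ‖g x‖ ≤ ‖g' x‖) : L2On Ω g ≤ L2On Ω g' :=
  Real.rpow_le_rpow (integral_nonneg fun _ => by positivity)
    (integral_mono_of_nonneg (.of_forall fun _ => by positivity) hg'
      (.of_forall fun x => pow_le_pow_left₀ (norm_nonneg _) (h x) 2)) (by norm_num)

end L2On

section SobolevDensity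

variable {E F : Type*} [NormedAddCommGroup E] [NormedSpace ℝ E] [NormedAddCommGroup F]
  [NormedSpace ℝ F]

def sobolevDensity (n : ℕ) (g : E → F) (x : E) : ℝ :=
  √(∑ j ∈ Finset.range (n + 1), ‖iteratedFDeriv ℝ j g x‖ ^ 2)

lemma norm_iteratedFDeriv_le_sobolevDensity {j n : ℕ} (hj : j ≤ n) (g : E → F) (x : E) :
    ‖iteratedFDeriv ℝ j g x‖ ≤ sobolevDensity n g x :=
  Real.le_sqrt_of_sq_le <| Finset.single_le_sum (f := fun j => ‖iteratedFDeriv ℝ j g x‖ ^ 2)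
    (fun _ _ => by positivity) (Finset.mem_range.2 (Nat.lt_succ_of_le hj))

lemma sobolevDensity_nonneg (n : ℕ) (g : E → F) (x : E) : 0 ≤ sobolevDensity n g x :=
  Real.sqrt_nonneg _

lemma continuous_sobolevDensity {n : ℕ} {g : E → F} (hg : ContDiff ℝ n g) :
    Continuous (sobolevDensity n g) :=
  (continuous_finsetSum _ fun _ hj =>
    ((hg.continuous_iteratedFDeriv (mod_cast Finset.mem_range_succ_iff.1 hj)).norm.pow 2)).sqrt

end SobolevDensity

lemma H4On_eq_L2On_sobolevDensity {Ω : Set E3} (hΩ : IsBounded Ω) {f : E3 → ℂ}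
    (hf : ContDiff ℝ 4 f) : H4On Ω f = L2On Ω (fun x => (sobolevDensity 4 f x : ℂ)) := by
  have hint : ∀ j ∈ Finset.range 5, IntegrableOn (fun x => ‖iteratedFDeriv ℝ j f x‖ ^ 2) Ω :=
    fun _ hj => ((hf.continuous_iteratedFDeriv (mod_cast Finset.mem_range_succ_iff.1 hj)).norm.pow
      2).integrableOn_of_isBounded hΩ
  simp only [L2On, H4On, Complex.norm_real, Real.norm_eq_abs, sq_abs, sobolevDensity]
  rw [← integral_finsetSum _ hint]
  congr 2 with x
  exact (Real.sq_sqrt (by positivity)).symm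

lemma L2On_le_mul_H4On {Ω : Set E3} (hΩ : IsBounded Ω) {f g : E3 → ℂ} (hf : ContDiff ℝ 4 f)
    {K : ℝ} (hK : 0 ≤ K) (hg : ∀ x, ‖g x‖ ≤ K * sobolevDensity 4 f x) :
    L2On Ω g ≤ K * H4On Ω f := by
  have hρ := continuous_sobolevDensity hf
  calc L2On Ω g ≤ L2On Ω (fun x => (K : ℂ) * (sobolevDensity 4 f x : ℂ)) := by
        refine L2On_mono ((Continuous.norm (by fun_prop)).pow 2 |>.integrableOn_of_isBounded hΩ)
          fun x => ?_
        rw [← Complex.ofReal_mul, Complex.norm_real,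
          Real.norm_of_nonneg (mul_nonneg hK (sobolevDensity_nonneg _ _ _))]
        exact hg x
    _ = K * H4On Ω f := by
        rw [L2On_const_mul, Complex.norm_real, Real.norm_of_nonneg hK,
          H4On_eq_L2On_sobolevDensity hΩ hf]

lemma norm_iteratedFDeriv_mul_le_of_forall_le {𝕜 E A : Type*} [NontriviallyNormedField 𝕜]
    [NormedAddCommGroup E] [NormedSpace 𝕜 E] [NormedRing A] [NormedAlgebra 𝕜 A] {a b : E → A}
    {n : ℕ} (ha : ContDiff 𝕜 n a) (hb : ContDiff 𝕜 n b) {x : E} {Ca Cb : ℝ}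
    (hCa : ∀ i ≤ n, ‖iteratedFDeriv 𝕜 i a x‖ ≤ Ca) (hCb : ∀ i ≤ n, ‖iteratedFDeriv 𝕜 i b x‖ ≤ Cb) :
    ‖iteratedFDeriv 𝕜 n (fun y => a y * b y) x‖ ≤ 2 ^ n * Ca * Cb := by
  have hCa0 : 0 ≤ Ca := (norm_nonneg _).trans (hCa 0 n.zero_le)
  calc ‖iteratedFDeriv 𝕜 n (fun y => a y * b y) x‖
      ≤ ∑ i ∈ Finset.range (n + 1),
          (n.choose i : ℝ) * ‖iteratedFDeriv 𝕜 i a x‖ * ‖iteratedFDeriv 𝕜 (n - i) b x‖ :=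
        norm_iteratedFDeriv_mul_le ha hb x le_rfl
    _ ≤ ∑ i ∈ Finset.range (n + 1), (n.choose i : ℝ) * Ca * Cb := by
        gcongr with i hi
        · exact hCa i (Finset.mem_range_succ_iff.1 hi)
        · exact hCb (n - i) (n.sub_le i)
    _ = 2 ^ n * Ca * Cb := by
        rw [← Finset.sum_mul, ← Finset.sum_mul, ← Nat.cast_sum, Nat.sum_range_choose]
        push_cast
        ring

def sqMulLap3 (c : E3 → ℝ) (f : E3 → ℂ) (x : E3) : ℂ := (c x : ℂ) ^ 2 * lap3 f x

section Coefficient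

variable {c : E3 → ℝ} (hc : ContDiff ℝ 2 c) {Mc : ℝ}
  (hMc : ∀ j : ℕ, j ≤ 2 → ∀ x : E3, ‖iteratedFDeriv ℝ j c x‖ ≤ Mc)
  {f : E3 → ℂ} (hf : ContDiff ℝ 4 f)
include hc

lemma contDiff_ofReal_sq : ContDiff ℝ 2 (fun x => (c x : ℂ) ^ 2) :=
  (Complex.ofRealCLM.contDiff.comp hc).pow 2

include hMc in
lemma norm_iteratedFDeriv_ofReal_sq_le {j : ℕ} (hj : j ≤ 2) (x : E3) :
    ‖iteratedFDeriv ℝ j (fun x => (c x : ℂ) ^ 2) x‖ ≤ 4 * Mc ^ 2 := by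
  have hc' : ContDiff ℝ j (Complex.ofRealLI ∘ c) :=
    Complex.ofRealCLM.contDiff.comp (hc.of_le (mod_cast hj))
  have hnorm : ∀ i ≤ j, ‖iteratedFDeriv ℝ i (Complex.ofRealLI ∘ c) x‖ ≤ Mc := fun i hi => by
    rw [Complex.ofRealLI.norm_iteratedFDeriv_comp_left (hc.contDiffAt) (mod_cast hi.trans hj)]
    exact hMc i (hi.trans hj) x
  have h := norm_iteratedFDeriv_mul_le_of_forall_le hc' hc' hnorm hnorm
  simp only [Function.comp_apply, ← sq] at h
  have hMc0 : 0 ≤ Mc := (norm_nonneg _).trans (hMc 0 (Nat.zero_le 2) x)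
  refine h.trans ?_
  calc (2 : ℝ) ^ j * Mc * Mc ≤ 2 ^ 2 * Mc * Mc := by gcongr; norm_num
    _ = 4 * Mc ^ 2 := by ring

include hf

lemma contDiff_sqMulLap3 : ContDiff ℝ 2 (sqMulLap3 c f) :=
  (contDiff_ofReal_sq hc).mul (contDiff_lap3 hf)

include hMc

lemma norm_iteratedFDeriv_sqMulLap3_le {j : ℕ} (hj : j ≤ 2) (x : E3) :
    ‖iteratedFDeriv ℝ j (sqMulLap3 c f) x‖ ≤ 48 * Mc ^ 2 * sobolevDensity 4 f x := by
  have hlap : ∀ i ≤ j, ‖iteratedFDeriv ℝ i (lap3 f) x‖ ≤ 3 * sobolevDensity 4 f x := fun i hi =>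
    (norm_iteratedFDeriv_lap3_le (hf.of_le (mod_cast (by omega : i + 2 ≤ 4))) x).trans
      (by gcongr; exact norm_iteratedFDeriv_le_sobolevDensity (by omega) f x)
  refine (norm_iteratedFDeriv_mul_le_of_forall_le ((contDiff_ofReal_sq hc).of_le (mod_cast hj))
    ((contDiff_lap3 hf).of_le (mod_cast hj))
    (fun i hi => norm_iteratedFDeriv_ofReal_sq_le hc hMc (hi.trans hj) x) hlap).trans ?_
  have := sobolevDensity_nonneg 4 f x
  calc (2 : ℝ) ^ j * (4 * Mc ^ 2) * (3 * sobolevDensity 4 f x)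
      ≤ 2 ^ 2 * (4 * Mc ^ 2) * (3 * sobolevDensity 4 f x) := by gcongr; norm_num
    _ = 48 * Mc ^ 2 * sobolevDensity 4 f x := by ring

lemma norm_sqMulLap3_le (x : E3) :
    ‖sqMulLap3 c f x‖ ≤ 48 * Mc ^ 2 * sobolevDensity 4 f x := by
  simpa using norm_iteratedFDeriv_sqMulLap3_le hc hMc hf (Nat.zero_le 2) x

lemma norm_lap3_sqMulLap3_le (x : E3) :
    ‖lap3 (sqMulLap3 c f) x‖ ≤ 144 * Mc ^ 2 * sobolevDensity 4 f x := by
  have h := norm_iteratedFDeriv_lap3_le (n := 0) (contDiff_sqMulLap3 hc hf) x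
  rw [norm_iteratedFDeriv_zero] at h
  linarith [norm_iteratedFDeriv_sqMulLap3_le hc hMc hf le_rfl x]

end Coefficient

def helmholtz (c : E3 → ℝ) (k : ℝ) (v : E3 → ℂ) (x : E3) : ℂ :=
  -(lap3 v x) - ((k ^ 2 / (c x) ^ 2 : ℝ) : ℂ) * v x

def helmholtzCorrector (c : E3 → ℝ) (k : ℝ) (f : E3 → ℂ) (x : E3) : ℂ :=
  -I / k * f x + I / k ^ 3 * sqMulLap3 c f x

lemma helmholtz_sub {c : E3 → ℝ} {k : ℝ} {u w : E3 → ℂ} (hu : ContDiff ℝ 2 u)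
    (hw : ContDiff ℝ 2 w) (x : E3) :
    helmholtz c k (fun y => u y - w y) x = helmholtz c k u x - helmholtz c k w x := by
  have h := lap3_linear_comb hu hw 1 (-1) x
  simp only [one_mul, neg_one_mul, ← sub_eq_add_neg] at h
  simp only [helmholtz, h]
  ring

section Corrector

variable {c : E3 → ℝ} (hc : ContDiff ℝ 2 c) {f : E3 → ℂ} (hf : ContDiff ℝ 4 f) {k : ℝ}
include hc hf

lemma contDiff_helmholtzCorrector : ContDiff ℝ 2 (helmholtzCorrector c k f) :=
  (contDiff_const.mul (hf.of_le (by norm_num))).add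
    (contDiff_const.mul (contDiff_sqMulLap3 hc hf))

lemma helmholtz_helmholtzCorrector (hk : k ≠ 0) {x : E3} (hcx : c x ≠ 0) :
    helmholtz c k (helmholtzCorrector c k f) x =
      I * k / (c x : ℂ) ^ 2 * f x - I / k ^ 3 * lap3 (sqMulLap3 c f) x := by
  rw [helmholtz, helmholtzCorrector, show (helmholtzCorrector c k f) = fun y =>
    -I / k * f y + I / k ^ 3 * sqMulLap3 c f y from rfl,
    lap3_linear_comb (hf.of_le (by norm_num)) (contDiff_sqMulLap3 hc hf), sqMulLap3]
  have hk' : (k : ℂ) ≠ 0 := mod_cast hk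
  have hcx' : (c x : ℂ) ≠ 0 := mod_cast hcx
  push_cast
  field_simp
  ring

lemma helmholtz_sub_helmholtzCorrector (hk : k ≠ 0) (hc0 : ∀ x, c x ≠ 0) {u : E3 → ℂ}
    (hu : ContDiff ℝ 2 u) (hpde : ∀ x, helmholtz c k u x = I * k / (c x : ℂ) ^ 2 * f x) (x : E3) :
    helmholtz c k (fun y => u y - helmholtzCorrector c k f y) x =
      I / k ^ 3 * lap3 (sqMulLap3 c f) x := by
  rw [helmholtz_sub hu (contDiff_helmholtzCorrector hc hf),
    helmholtz_helmholtzCorrector hc hf hk (hc0 x), hpde]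
  ring

lemma L2On_add_I_mul_div_le {Ω : Set E3} (hΩ : IsBounded Ω) {u : E3 → ℂ} (hu : Continuous u)
    (hk : 0 < k) :
    L2On Ω (fun x => u x + I * f x / k) ≤
      L2On Ω (fun x => u x - helmholtzCorrector c k f x) + L2On Ω (sqMulLap3 c f) / k ^ 3 := by
  have hsplit : (fun x => u x + I * f x / k) =
      fun x => (u x - helmholtzCorrector c k f x) + I / (k : ℂ) ^ 3 * sqMulLap3 c f x := by
    funext x
    simp only [helmholtzCorrector]
    ring
  rw [hsplit, ← L2On_I_div_pow_mul _ hk]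
  exact L2On_add_le ((hu.sub (contDiff_helmholtzCorrector hc hf).continuous).memLp_two_restrict hΩ)
    ((continuous_const.mul (contDiff_sqMulLap3 hc hf).continuous).memLp_two_restrict hΩ)

end Corrector

lemma tsupport_sqMulLap3_subset (c : E3 → ℝ) (f : E3 → ℂ) :
    tsupport (sqMulLap3 c f) ⊆ tsupport f :=
  tsupport_mul_subset_right.trans (tsupport_lap3_subset f)

lemma hasCompactSupport_helmholtzCorrector {f : E3 → ℂ} (hf : HasCompactSupport f)
    (c : E3 → ℝ) (k : ℝ) : HasCompactSupport (helmholtzCorrector c k f) :=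
  hf.mono' <| subset_closure.trans <| (tsupport_add _ _).trans <| Set.union_subset
    tsupport_mul_subset_right (tsupport_mul_subset_right.trans (tsupport_sqMulLap3_subset c f))

theorem stmt18_general
    (Ω : Set E3) (hΩb : Bornology.IsBounded Ω)
    (c : E3 → ℝ) (hc2 : ContDiff ℝ 2 c)
    (Mc : ℝ) (hMc : ∀ j : ℕ, j ≤ 2 → ∀ x : E3, ‖iteratedFDeriv ℝ j c x‖ ≤ Mc)
    (cmin cmax : ℝ) (hcmin : 0 < cmin) (hcbd : ∀ x : E3, cmin ≤ c x ∧ c x ≤ cmax)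
    (Outgoing : ℝ → (E3 → ℂ) → Prop)
    (hout_sub : ∀ (k : ℝ) (v w : E3 → ℂ), Outgoing k v → HasCompactSupport w →
      Outgoing k (fun x => v x - w x))
    (C₀ k₀ : ℝ) (hC₀ : 0 < C₀) (hk₀ : 1 ≤ k₀)
    (hres : ∀ k ≥ k₀, ∀ v ϕ : E3 → ℂ, Outgoing k v →
      Function.support ϕ ⊆ Ω →
      (∀ x : E3, -(lap3 v x) - (((k ^ 2 / (c x) ^ 2 : ℝ)) : ℂ) * v x = ϕ x) →
      L2On Ω v ≤ C₀ * k⁻¹ * L2On Ω ϕ)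
    (f : E3 → ℂ) (hf4 : ContDiff ℝ 4 f) (hfsupp : tsupport f ⊆ Ω)
    (uhat : ℝ → E3 → ℂ) (hureg : ∀ k : ℝ, ContDiff ℝ 2 (uhat k))
    (huout : ∀ k : ℝ, Outgoing k (uhat k))
    (hupde : ∀ (k : ℝ) (x : E3),
      -(lap3 (uhat k) x) - (((k ^ 2 / (c x) ^ 2 : ℝ)) : ℂ) * uhat k x
        = (Complex.I * (k : ℂ) / ((c x : ℝ) : ℂ) ^ 2) * f x) :
    ∃ C > 0, ∀ k ≥ k₀,
      L2On Ω (fun x => uhat k x + Complex.I * f x / (k : ℂ))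
        ≤ C / k ^ 3 * H4On Ω f := by
  have hc0 : ∀ x, c x ≠ 0 := fun x => (hcmin.trans_le (hcbd x).1).ne'
  have hMc_pos : 0 < Mc := (hcmin.trans_le (hcbd 0).1).trans_le <|
    (le_abs_self _).trans (by simpa using hMc 0 (Nat.zero_le 2) 0)
  have hf_cpt : HasCompactSupport f :=
    Metric.isCompact_of_isClosed_isBounded (isClosed_tsupport f) (hΩb.subset hfsupp)
  have hlap_h : L2On Ω (lap3 (sqMulLap3 c f)) ≤ 144 * Mc ^ 2 * H4On Ω f :=
    L2On_le_mul_H4On hΩb hf4 (by positivity) (norm_lap3_sqMulLap3_le hc2 hMc hf4)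
  have hh : L2On Ω (sqMulLap3 c f) ≤ 48 * Mc ^ 2 * H4On Ω f :=
    L2On_le_mul_H4On hΩb hf4 (by positivity) (norm_sqMulLap3_le hc2 hMc hf4)
  refine ⟨(144 * C₀ + 48) * Mc ^ 2, by positivity, fun k hk => ?_⟩
  have hk1 : 1 ≤ k := hk₀.trans hk
  have hR₁ : L2On Ω (fun x => uhat k x - helmholtzCorrector c k f x) ≤
      C₀ * k⁻¹ * (L2On Ω (lap3 (sqMulLap3 c f)) / k ^ 3) := by
    rw [← L2On_I_div_pow_mul _ (by positivity)]
    refine hres k hk _ _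
      (hout_sub k _ _ (huout k) (hasCompactSupport_helmholtzCorrector hf_cpt c k)) ?_
      (helmholtz_sub_helmholtzCorrector hc2 hf4 (by positivity) hc0 (hureg k) (hupde k))
    exact (Function.support_mul_subset_right _ _).trans <| (support_lap3_subset _).trans <|
      (tsupport_sqMulLap3_subset c f).trans hfsupp
  have hlap_h_nonneg := L2On_nonneg Ω (lap3 (sqMulLap3 c f))
  calc L2On Ω (fun x => uhat k x + I * f x / k)
      ≤ L2On Ω (fun x => uhat k x - helmholtzCorrector c k f x) + L2On Ω (sqMulLap3 c f) / k ^ 3 :=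
        L2On_add_I_mul_div_le hc2 hf4 hΩb (hureg k).continuous (by positivity)
    _ ≤ C₀ * 1 * (144 * Mc ^ 2 * H4On Ω f / k ^ 3) + 48 * Mc ^ 2 * H4On Ω f / k ^ 3 := by
        gcongr
        exact hR₁.trans (by gcongr; exact inv_le_one_of_one_le₀ hk1)
    _ = (144 * C₀ + 48) * Mc ^ 2 / k ^ 3 * H4On Ω f := by ring

/-- under the resolvent estimate ‖û‖_{L²(Ω)} ≤ C₀ k⁻¹ ‖φ‖_{L²(Ω)} for
outgoing solutions of −Δû − (k²/c²)û = φ with supp φ ⊆ Ω, the outgoing solution û(·,k)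
with source (ik/c²)f satisfies ‖û(·,k) + i f/k‖_{L²(Ω)} ≤ C k⁻³ ‖f‖_{H⁴(Ω)}
for all k ≥ k₀. -/
theorem stmt18
    (Ω : Set E3) (hΩo : IsOpen Ω) (hΩb : Bornology.IsBounded Ω)
    (c : E3 → ℝ) (hc2 : ContDiff ℝ 2 c)
    (Mc : ℝ) (hMc : ∀ j : ℕ, j ≤ 2 → ∀ x : E3, ‖iteratedFDeriv ℝ j c x‖ ≤ Mc)
    (cmin cmax : ℝ) (hcmin : 0 < cmin) (hcbd : ∀ x : E3, cmin ≤ c x ∧ c x ≤ cmax)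
    (hc1 : ∀ x ∉ Ω, c x = 1)
    (Outgoing : ℝ → (E3 → ℂ) → Prop)
    (hout_sub : ∀ (k : ℝ) (v w : E3 → ℂ), Outgoing k v → HasCompactSupport w →
      Outgoing k (fun x => v x - w x))
    (C₀ k₀ : ℝ) (hC₀ : 0 < C₀) (hk₀ : 1 ≤ k₀)
    (hres : ∀ k ≥ k₀, ∀ v ϕ : E3 → ℂ, Outgoing k v →
      Function.support ϕ ⊆ Ω →
      (∀ x : E3, -(lap3 v x) - (((k ^ 2 / (c x) ^ 2 : ℝ)) : ℂ) * v x = ϕ x) →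
      L2On Ω v ≤ C₀ * k⁻¹ * L2On Ω ϕ)
    (f : E3 → ℂ) (hf4 : ContDiff ℝ 4 f) (hfsupp : tsupport f ⊆ Ω)
    (uhat : ℝ → E3 → ℂ) (hureg : ∀ k : ℝ, ContDiff ℝ 2 (uhat k))
    (huout : ∀ k : ℝ, Outgoing k (uhat k))
    (hupde : ∀ (k : ℝ) (x : E3),
      -(lap3 (uhat k) x) - (((k ^ 2 / (c x) ^ 2 : ℝ)) : ℂ) * uhat k x
        = (Complex.I * (k : ℂ) / ((c x : ℝ) : ℂ) ^ 2) * f x) :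
    ∃ C > 0, ∀ k ≥ k₀,
      L2On Ω (fun x => uhat k x + Complex.I * f x / (k : ℂ))
        ≤ C / k ^ 3 * H4On Ω f :=
  stmt18_general Ω hΩb c hc2 Mc hMc cmin cmax hcmin hcbd Outgoing hout_sub C₀ k₀ hC₀ hk₀ hres f hf4
    hfsupp uhat hureg huout hupde

end
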